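/- arXiv:1205.3726 — 2 statements merged into one kernel-verified Lean document; each statement's English description precedes it below -/
import Mathlib

section
/- Suppose ξ = Ũ_0 + Σ_{k=0}^{N−1} H^F_k·ΔM_k + Õ_N P-a.s., where Ũ_0 is square-integrable and F_0-measurable, each H^F_k is F_k-measurable, square-integrable, with H^F_k·ΔM_k square-integrable, and Õ_N is square-integrable with E[Õ_N·(V_0 + Σ_{k=0}^{N−1} φ_k·ΔM_k)] = 0 for every square-integrable F_0-measurable V_0 and every process φ with φ_k F_k-measurable and φ_k·ΔM_k square-integrable. Assume moreover that for every k the conditional variance w_k := E[(ΔM_k)² | F_k] is (a.e. equal to) an H_k-measurable function. Then, setting U_0 := E[Ũ_0 | H_0] and H^H_k := E[H^F_k | H_k], each H^H_k·ΔM_k is square-integrable and the random variable ξ − U_0 − Σ_{k=0}^{N−1} H^H_k·ΔM_k is orthogonal in L²(P) to every element of L^H. -/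
/-!
Write `Δₖ = M (k + 1) - M k` and `wₖ = E[Δₖ² | 𝔽 k]`. For `𝔽 k`-measurable `a` and `ℍ k`-measurable
`ψ`, conditioning on `𝔽 k` gives `E[a Δₖ · ψ Δₖ] = E[a ψ wₖ]`, which only sees `E[a | ℍ k]` because
`ψ wₖ` is `ℍ k`-measurable. So `(H^F_k - H^H_k) Δₖ` is orthogonal to `ψ Δₖ`; the martingale
property makes it orthogonal to `V₀` and to the increments at other times, and likewise `Ũ₀ - U₀`.
As `ξ - U₀ - ∑ H^H_k Δₖ = (Ũ₀ - U₀) + ∑ (H^F_k - H^H_k) Δₖ + Õ_N`, the orthogonality follows.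
Square-integrability of `H^H_k Δₖ` comes from the same identity and conditional Jensen,
`E[(H^H_k)² wₖ] ≤ E[E[(H^F_k)² | ℍ k] wₖ] = E[(H^F_k Δₖ)²]`, computed with lower Lebesgue integrals
since integrability is what is at stake.
-/

open MeasureTheory

section
variable {Ω : Type*} {mΩ : MeasurableSpace Ω} {P : Measure Ω} {m : MeasurableSpace Ω}

theorem integral_mul_condExp_of_stronglyMeasurable (hm : m ≤ mΩ) [SigmaFinite (P.trim hm)]
    {g f : Ω → ℝ} (hg : StronglyMeasurable[m] g) (hgf : Integrable (g * f) P)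
    (hf : Integrable f P) :
    ∫ ω, g ω * (P[f|m]) ω ∂P = ∫ ω, g ω * f ω ∂P :=
  calc ∫ ω, g ω * (P[f|m]) ω ∂P = ∫ ω, (P[g * f|m]) ω ∂P :=
        integral_congr_ae (condExp_mul_of_stronglyMeasurable_left hg hgf hf).symm
    _ = ∫ ω, g ω * f ω ∂P := integral_condExp hm

theorem condExp_sub_condExp_ae_eq_zero (hm : m ≤ mΩ) [SigmaFinite (P.trim hm)] {f : Ω → ℝ}
    (hf : Integrable f P) : P[f - P[f|m]|m] =ᵐ[P] 0 := by
  filter_upwards [condExp_sub hf integrable_condExp m] with ω hω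
  rw [hω, condExp_of_stronglyMeasurable hm stronglyMeasurable_condExp integrable_condExp,
    Pi.sub_apply, sub_self, Pi.zero_apply]

theorem integral_sub_condExp_mul_eq_zero (hm : m ≤ mΩ) [SigmaFinite (P.trim hm)]
    {f g : Ω → ℝ} (hg : StronglyMeasurable[m] g) (hf : Integrable f P)
    (hfg : Integrable ((f - P[f|m]) * g) P) :
    ∫ ω, (f ω - (P[f|m]) ω) * g ω ∂P = 0 :=
  calc ∫ ω, (f ω - (P[f|m]) ω) * g ω ∂P = ∫ ω, g ω * (f - P[f|m]) ω ∂P := by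
        simp_rw [mul_comm, Pi.sub_apply]
    _ = ∫ ω, g ω * (P[f - P[f|m]|m]) ω ∂P :=
        (integral_mul_condExp_of_stronglyMeasurable hm hg (by rwa [mul_comm])
          (hf.sub integrable_condExp)).symm
    _ = 0 := by
        rw [integral_congr_ae ((condExp_sub_condExp_ae_eq_zero hm hf).mono fun ω h => by
          rw [h, Pi.zero_apply, mul_zero])]
        exact integral_zero Ω ℝ

theorem lintegral_ofReal_condExp_mul (hm : m ≤ mΩ) [SigmaFinite (P.trim hm)]
    {f : Ω → ℝ} (hf : Integrable f P) (hf0 : 0 ≤ᵐ[P] f) {g : Ω → ENNReal} (hg : Measurable[m] g) :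
    ∫⁻ ω, ENNReal.ofReal ((P[f|m]) ω) * g ω ∂P = ∫⁻ ω, ENNReal.ofReal (f ω) * g ω ∂P := by
  have htrim : (P.withDensity fun ω => ENNReal.ofReal ((P[f|m]) ω)).trim hm
      = (P.withDensity fun ω => ENNReal.ofReal (f ω)).trim hm := by
    refine Measure.ext fun s hs => ?_
    rw [trim_measurableSet_eq hm hs, trim_measurableSet_eq hm hs, withDensity_apply _ (hm s hs),
      withDensity_apply _ (hm s hs), ← ofReal_integral_eq_lintegral_ofReal
      integrable_condExp.restrict (ae_restrict_of_ae (condExp_nonneg hf0)),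
      ← ofReal_integral_eq_lintegral_ofReal hf.restrict (ae_restrict_of_ae hf0),
      setIntegral_condExp hm hf hs]
  have hg' : AEMeasurable g P := (hg.mono hm le_rfl).aemeasurable
  calc ∫⁻ ω, ENNReal.ofReal ((P[f|m]) ω) * g ω ∂P
      = ∫⁻ ω, g ω ∂(P.withDensity fun ω => ENNReal.ofReal ((P[f|m]) ω)) :=
        (lintegral_withDensity_eq_lintegral_mul₀
          integrable_condExp.1.aemeasurable.ennreal_ofReal hg').symm
    _ = ∫⁻ ω, g ω ∂(P.withDensity fun ω => ENNReal.ofReal (f ω)) := by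
        rw [← lintegral_trim hm hg, ← lintegral_trim hm hg, htrim]
    _ = ∫⁻ ω, ENNReal.ofReal (f ω) * g ω ∂P :=
        lintegral_withDensity_eq_lintegral_mul₀ hf.1.aemeasurable.ennreal_ofReal hg'

theorem sq_condExp_ae_le_condExp_sq [IsFiniteMeasure P] (hm : m ≤ mΩ) {f : Ω → ℝ}
    (hf : MemLp f 2 P) :
    ∀ᵐ ω ∂P, (P[f|m]) ω ^ 2 ≤ (P[fun ω => f ω ^ 2|m]) ω :=
  (even_two.convexOn_pow).map_condExp_le_univ hm (continuous_pow 2).lowerSemicontinuous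
    (hf.integrable one_le_two) hf.integrable_sq

theorem memLp_condExp_mul_of_condExp_sq_ae_eq [IsFiniteMeasure P] {m𝔽 : MeasurableSpace Ω}
    (hm : m ≤ m𝔽) (hm𝔽 : m𝔽 ≤ mΩ) {h d w : Ω → ℝ} (hh : StronglyMeasurable[m𝔽] h)
    (hh2 : MemLp h 2 P) (hd2 : MemLp d 2 P) (hhd : MemLp (fun ω => h ω * d ω) 2 P)
    (hw : StronglyMeasurable[m] w) (hdw : P[fun ω => d ω ^ 2|m𝔽] =ᵐ[P] w) :
    MemLp (fun ω => (P[h|m]) ω * d ω) 2 P := by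
  have hd2i : Integrable (fun ω => d ω ^ 2) P := hd2.integrable_sq
  have hh2i : Integrable (fun ω => h ω ^ 2) P := hh2.integrable_sq
  have hsq : ∀ a b : ℝ,
      ENNReal.ofReal ((a * b) ^ 2) = ENNReal.ofReal (b ^ 2) * ENNReal.ofReal (a ^ 2) :=
    fun a b => by rw [mul_pow, mul_comm, ENNReal.ofReal_mul (sq_nonneg _)]
  have hcH : StronglyMeasurable[m] (P[h|m]) := stronglyMeasurable_condExp
  have hmeas : AEStronglyMeasurable[mΩ] (fun ω => (P[h|m]) ω * d ω) P :=
    (hcH.mono (hm.trans hm𝔽)).aestronglyMeasurable.mul hd2.1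
  refine (memLp_two_iff_integrable_sq hmeas).2 ⟨hmeas.pow 2, ?_⟩
  refine (hasFiniteIntegral_iff_ofReal (ae_of_all _ fun ω => sq_nonneg _)).2 ?_
  calc ∫⁻ ω, ENNReal.ofReal (((P[h|m]) ω * d ω) ^ 2) ∂P
      = ∫⁻ ω, ENNReal.ofReal (d ω ^ 2) * ENNReal.ofReal ((P[h|m]) ω ^ 2) ∂P := by
        simp_rw [hsq]
    _ = ∫⁻ ω, ENNReal.ofReal ((P[fun ω => d ω ^ 2|m𝔽]) ω)
          * ENNReal.ofReal ((P[h|m]) ω ^ 2) ∂P :=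
        (lintegral_ofReal_condExp_mul hm𝔽 hd2i (ae_of_all _ fun ω => sq_nonneg _)
          ((hcH.mono hm).measurable.pow_const 2).ennreal_ofReal).symm
    _ ≤ ∫⁻ ω, ENNReal.ofReal (w ω) * ENNReal.ofReal ((P[fun ω => h ω ^ 2|m]) ω) ∂P := by
        refine lintegral_mono_ae ?_
        filter_upwards [hdw, sq_condExp_ae_le_condExp_sq (hm.trans hm𝔽) hh2] with ω hdω hhω
        rw [hdω]
        gcongr
    _ = ∫⁻ ω, ENNReal.ofReal (h ω ^ 2) * ENNReal.ofReal (w ω) ∂P := by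
        simp_rw [mul_comm (ENNReal.ofReal (w _))]
        exact lintegral_ofReal_condExp_mul (hm.trans hm𝔽) hh2i (ae_of_all _ fun ω => sq_nonneg _)
          hw.measurable.ennreal_ofReal
    _ = ∫⁻ ω, ENNReal.ofReal ((P[fun ω => d ω ^ 2|m𝔽]) ω) * ENNReal.ofReal (h ω ^ 2) ∂P := by
        refine lintegral_congr_ae ?_
        filter_upwards [hdw] with ω hdω
        rw [hdω, mul_comm]
    _ = ∫⁻ ω, ENNReal.ofReal ((h ω * d ω) ^ 2) ∂P := by
        simp_rw [hsq]
        exact lintegral_ofReal_condExp_mul hm𝔽 hd2i (ae_of_all _ fun ω => sq_nonneg _)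
          (hh.measurable.pow_const 2).ennreal_ofReal
    _ < ⊤ := hhd.integrable_sq.lintegral_lt_top

theorem integral_sub_condExp_mul_mul_eq_zero_of_condExp_sq_ae_eq [IsFiniteMeasure P]
    {m𝔽 : MeasurableSpace Ω} (hm : m ≤ m𝔽) (hm𝔽 : m𝔽 ≤ mΩ) {f ψ d w : Ω → ℝ}
    (hf : StronglyMeasurable[m𝔽] f) (hfi : Integrable f P) (hψ : StronglyMeasurable[m] ψ) (hd2 : MemLp d 2 P)
    (hfd : MemLp (fun ω => (f ω - (P[f|m]) ω) * d ω) 2 P) (hψd : MemLp (fun ω => ψ ω * d ω) 2 P)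
    (hw : StronglyMeasurable[m] w) (hdw : P[fun ω => d ω ^ 2|m𝔽] =ᵐ[P] w) :
    ∫ ω, (f ω - (P[f|m]) ω) * d ω * (ψ ω * d ω) ∂P = 0 := by
  set g : Ω → ℝ := fun ω => (f ω - (P[f|m]) ω) * ψ ω
  have hg : StronglyMeasurable[m𝔽] g :=
    (hf.sub (stronglyMeasurable_condExp.mono hm)).mul (hψ.mono hm)
  have hgd : Integrable (g * fun ω => d ω ^ 2) P :=
    (hfd.integrable_mul hψd).congr (ae_of_all _ fun ω => by simp only [g, Pi.mul_apply]; ring)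
  have hpull : P[g * fun ω => d ω ^ 2|m𝔽] =ᵐ[P] fun ω => (f ω - (P[f|m]) ω) * (ψ ω * w ω) := by
    filter_upwards [condExp_mul_of_stronglyMeasurable_left hg hgd hd2.integrable_sq, hdw]
      with ω hω hdω
    rw [hω, Pi.mul_apply, hdω, mul_assoc]
  calc ∫ ω, (f ω - (P[f|m]) ω) * d ω * (ψ ω * d ω) ∂P
      = ∫ ω, (P[g * fun ω => d ω ^ 2|m𝔽]) ω ∂P := by
        rw [integral_condExp hm𝔽]
        exact integral_congr_ae (ae_of_all _ fun ω => by simp only [g, Pi.mul_apply]; ring)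
    _ = ∫ ω, (f ω - (P[f|m]) ω) * (ψ ω * w ω) ∂P := integral_congr_ae hpull
    _ = 0 := integral_sub_condExp_mul_eq_zero (hm.trans hm𝔽) (hψ.mul hw) hfi
        (integrable_condExp.congr hpull)

theorem integral_mul_add_sum_eq_zero {ι : Type*} {s : Finset ι} {X V : Ω → ℝ}
    {Y : ι → Ω → ℝ} (hX : MemLp X 2 P) (hV : MemLp V 2 P) (hY : ∀ i ∈ s, MemLp (Y i) 2 P)
    (hXV : ∫ ω, X ω * V ω ∂P = 0) (hXY : ∀ i ∈ s, ∫ ω, X ω * Y i ω ∂P = 0) :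
    ∫ ω, X ω * (V ω + ∑ i ∈ s, Y i ω) ∂P = 0 := by
  simp_rw [mul_add, Finset.mul_sum]
  have hXYi : ∀ i ∈ s, Integrable (fun ω => X ω * Y i ω) P :=
    fun i hi => hX.integrable_mul (hY i hi)
  have hXVi : Integrable (fun ω => X ω * V ω) P := hX.integrable_mul hV
  rw [integral_add hXVi (integrable_finsetSum _ hXYi),
    integral_finsetSum _ hXYi, hXV, Finset.sum_eq_zero hXY, add_zero]

end

namespace MeasureTheory.Martingale

variable {Ω : Type*} {mΩ : MeasurableSpace Ω} {P : Measure Ω} [IsFiniteMeasure P]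
  {𝔽 : Filtration ℕ mΩ} {M : ℕ → Ω → ℝ}

theorem condExp_increment_ae_eq_zero (hM : Martingale M 𝔽 P) (k : ℕ) :
    P[M (k + 1) - M k|𝔽 k] =ᵐ[P] 0 := by
  filter_upwards [condExp_sub (hM.integrable (k + 1)) (hM.integrable k) (𝔽 k),
    hM.condExp_ae_eq k.le_succ] with ω hω hω'
  rw [hω, Pi.sub_apply, hω', condExp_of_stronglyMeasurable (𝔽.le k) (hM.stronglyAdapted k)
    (hM.integrable k), sub_self, Pi.zero_apply]

theorem integral_mul_mul_increment_eq_zero (hM : Martingale M 𝔽 P) {k : ℕ} {X a : Ω → ℝ}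
    (hX : StronglyMeasurable[𝔽 k] X) (ha : StronglyMeasurable[𝔽 k] a)
    (hXa : Integrable (fun ω => X ω * (a ω * (M (k + 1) ω - M k ω))) P) :
    ∫ ω, X ω * (a ω * (M (k + 1) ω - M k ω)) ∂P = 0 := by
  have hinc : Integrable (M (k + 1) - M k) P := (hM.integrable (k + 1)).sub (hM.integrable k)
  calc ∫ ω, X ω * (a ω * (M (k + 1) ω - M k ω)) ∂P
      = ∫ ω, (X * a) ω * (P[M (k + 1) - M k|𝔽 k]) ω ∂P := by
        rw [integral_mul_condExp_of_stronglyMeasurable (f := M (k + 1) - M k) (𝔽.le k) (hX.mul ha)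
          (hXa.congr (ae_of_all _ fun ω => (mul_assoc _ _ _).symm)) hinc]
        simp_rw [Pi.mul_apply, Pi.sub_apply, mul_assoc]
    _ = 0 := by
        rw [integral_congr_ae ((hM.condExp_increment_ae_eq_zero k).mono fun ω h => by
          rw [h, Pi.zero_apply, mul_zero])]
        exact integral_zero Ω ℝ

theorem integral_mul_increment_mul_mul_increment_eq_zero (hM : Martingale M 𝔽 P) {j k : ℕ}
    (hjk : j ≠ k) {a b : Ω → ℝ} (ha : StronglyMeasurable[𝔽 j] a) (hb : StronglyMeasurable[𝔽 k] b)
    (ha2 : MemLp (fun ω => a ω * (M (j + 1) ω - M j ω)) 2 P)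
    (hb2 : MemLp (fun ω => b ω * (M (k + 1) ω - M k ω)) 2 P) :
    ∫ ω, a ω * (M (j + 1) ω - M j ω) * (b ω * (M (k + 1) ω - M k ω)) ∂P = 0 := by
  have hincr : ∀ {i l : ℕ} {c : Ω → ℝ}, i < l → StronglyMeasurable[𝔽 i] c →
      StronglyMeasurable[𝔽 l] fun ω => c ω * (M (i + 1) ω - M i ω) := fun hil hc =>
    (hc.mono (𝔽.mono hil.le)).mul (((hM.stronglyAdapted _).mono (𝔽.mono hil)).sub
      ((hM.stronglyAdapted _).mono (𝔽.mono hil.le)))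
  rcases hjk.lt_or_gt with hlt | hgt
  · exact hM.integral_mul_mul_increment_eq_zero (hincr hlt ha) hb (ha2.integrable_mul hb2)
  · rw [← integral_mul_mul_increment_eq_zero hM (hincr hgt hb) ha (hb2.integrable_mul ha2)]
    simp_rw [mul_comm]

end MeasureTheory.Martingale

section Orthogonality

variable {Ω : Type*} {mΩ : MeasurableSpace Ω} {P : Measure Ω}

-- `X` is orthogonal in `L²(P)` to the paper's space `L^𝔾`.
def OrthogonalToMartingaleTransforms (𝔾 : Filtration ℕ mΩ) (M : ℕ → Ω → ℝ) (N : ℕ)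
    (P : Measure Ω) (X : Ω → ℝ) : Prop :=
  ∀ (V₀ : Ω → ℝ) (φ : ℕ → Ω → ℝ), MemLp V₀ 2 P → StronglyMeasurable[𝔾 0] V₀ →
    (∀ k, StronglyMeasurable[𝔾 k] (φ k)) →
    (∀ k, MemLp (fun ω => φ k ω * (M (k + 1) ω - M k ω)) 2 P) →
    ∫ ω, X ω * (V₀ ω + ∑ k ∈ Finset.range N, φ k ω * (M (k + 1) ω - M k ω)) ∂P = 0

theorem memLp_add_sum_mul_increment {M : ℕ → Ω → ℝ} {s : Finset ℕ} {V₀ : Ω → ℝ}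
    {φ : ℕ → Ω → ℝ} (hV₀ : MemLp V₀ 2 P)
    (hφ2 : ∀ k, MemLp (fun ω => φ k ω * (M (k + 1) ω - M k ω)) 2 P) :
    MemLp (fun ω => V₀ ω + ∑ k ∈ s, φ k ω * (M (k + 1) ω - M k ω)) 2 P :=
  hV₀.add (memLp_finsetSum _ fun k _ => hφ2 k)

namespace OrthogonalToMartingaleTransforms

variable {𝔽 ℍ : Filtration ℕ mΩ} {M : ℕ → Ω → ℝ} {N : ℕ} {X Y : Ω → ℝ}

theorem mono (hle : ∀ k, ℍ k ≤ 𝔽 k) (hX : OrthogonalToMartingaleTransforms 𝔽 M N P X) :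
    OrthogonalToMartingaleTransforms ℍ M N P X :=
  fun V₀ φ hV₀ hV₀m hφm hφ2 => hX V₀ φ hV₀ (hV₀m.mono (hle 0)) (fun k => (hφm k).mono (hle k)) hφ2

theorem congr_ae (hXY : X =ᵐ[P] Y) (hX : OrthogonalToMartingaleTransforms 𝔽 M N P X) :
    OrthogonalToMartingaleTransforms 𝔽 M N P Y := fun V₀ φ hV₀ hV₀m hφm hφ2 => by
  rw [← hX V₀ φ hV₀ hV₀m hφm hφ2]
  exact integral_congr_ae (hXY.mono fun ω h => by simp only [h])

theorem add (hX2 : MemLp X 2 P) (hY2 : MemLp Y 2 P)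
    (hX : OrthogonalToMartingaleTransforms 𝔽 M N P X)
    (hY : OrthogonalToMartingaleTransforms 𝔽 M N P Y) :
    OrthogonalToMartingaleTransforms 𝔽 M N P fun ω => X ω + Y ω :=
  fun V₀ φ hV₀ hV₀m hφm hφ2 => by
    have hT := memLp_add_sum_mul_increment (M := M) (s := Finset.range N) hV₀ hφ2
    have hXT : Integrable (fun ω => X ω * (V₀ ω + ∑ k ∈ Finset.range N,
        φ k ω * (M (k + 1) ω - M k ω))) P := hX2.integrable_mul hT
    have hYT : Integrable (fun ω => Y ω * (V₀ ω + ∑ k ∈ Finset.range N,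
        φ k ω * (M (k + 1) ω - M k ω))) P := hY2.integrable_mul hT
    simp_rw [add_mul]
    rw [integral_add hXT hYT, hX V₀ φ hV₀ hV₀m hφm hφ2, hY V₀ φ hV₀ hV₀m hφm hφ2, add_zero]

theorem finsetSum {ι : Type*} {s : Finset ι} {X : ι → Ω → ℝ} (hX2 : ∀ i ∈ s, MemLp (X i) 2 P)
    (hX : ∀ i ∈ s, OrthogonalToMartingaleTransforms 𝔽 M N P (X i)) :
    OrthogonalToMartingaleTransforms 𝔽 M N P fun ω => ∑ i ∈ s, X i ω :=
  fun V₀ φ hV₀ hV₀m hφm hφ2 => by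
    have hT := memLp_add_sum_mul_increment (M := M) (s := Finset.range N) hV₀ hφ2
    have hXT : ∀ i ∈ s, Integrable (fun ω => X i ω * (V₀ ω + ∑ k ∈ Finset.range N,
        φ k ω * (M (k + 1) ω - M k ω))) P := fun i hi => (hX2 i hi).integrable_mul hT
    simp_rw [Finset.sum_mul]
    rw [integral_finsetSum _ hXT]
    exact Finset.sum_eq_zero fun i hi => hX i hi V₀ φ hV₀ hV₀m hφm hφ2

end OrthogonalToMartingaleTransforms

variable {𝔽 ℍ : Filtration ℕ mΩ} {M : ℕ → Ω → ℝ} {N : ℕ} [IsFiniteMeasure P]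

theorem orthogonalToMartingaleTransforms_sub_condExp (hle : ∀ k, ℍ k ≤ 𝔽 k)
    (hM : Martingale M 𝔽 P) {U : Ω → ℝ} (hU : StronglyMeasurable[𝔽 0] U) (hU2 : MemLp U 2 P) :
    OrthogonalToMartingaleTransforms ℍ M N P fun ω => U ω - (P[U|ℍ 0]) ω :=
  fun V₀ φ hV₀ hV₀m hφm hφ2 => by
    have hU'2 : MemLp (fun ω => U ω - (P[U|ℍ 0]) ω) 2 P := hU2.sub (hU2.condExp one_le_two)
    refine integral_mul_add_sum_eq_zero hU'2 hV₀ (fun j _ => hφ2 j) ?_ fun j _ => ?_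
    · exact integral_sub_condExp_mul_eq_zero ((hle 0).trans (𝔽.le 0)) hV₀m
        (hU2.integrable one_le_two) (hU'2.integrable_mul hV₀)
    · exact hM.integral_mul_mul_increment_eq_zero
        ((hU.sub (stronglyMeasurable_condExp.mono (hle 0))).mono (𝔽.mono j.zero_le))
        ((hφm j).mono (hle j)) (hU'2.integrable_mul (hφ2 j))

theorem orthogonalToMartingaleTransforms_sub_condExp_mul_increment (hle : ∀ k, ℍ k ≤ 𝔽 k)
    (hM : Martingale M 𝔽 P) {k : ℕ} {H w : Ω → ℝ} (hH : StronglyMeasurable[𝔽 k] H)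
    (hHi : Integrable H P) (hinc : MemLp (fun ω => M (k + 1) ω - M k ω) 2 P)
    (hHinc : MemLp (fun ω => (H ω - (P[H|ℍ k]) ω) * (M (k + 1) ω - M k ω)) 2 P)
    (hw : StronglyMeasurable[ℍ k] w)
    (hincw : P[fun ω => (M (k + 1) ω - M k ω) ^ 2|𝔽 k] =ᵐ[P] w) :
    OrthogonalToMartingaleTransforms ℍ M N P
      fun ω => (H ω - (P[H|ℍ k]) ω) * (M (k + 1) ω - M k ω) :=
  fun V₀ φ hV₀ hV₀m hφm hφ2 => by
    have hH' : StronglyMeasurable[𝔽 k] fun ω => H ω - (P[H|ℍ k]) ω :=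
      hH.sub (stronglyMeasurable_condExp.mono (hle k))
    refine integral_mul_add_sum_eq_zero hHinc hV₀ (fun j _ => hφ2 j) ?_ fun j _ => ?_
    · simp_rw [mul_comm _ (V₀ _)]
      exact hM.integral_mul_mul_increment_eq_zero
        (hV₀m.mono ((ℍ.mono k.zero_le).trans (hle k))) hH' (hV₀.integrable_mul hHinc)
    · rcases eq_or_ne k j with rfl | hkj
      · exact integral_sub_condExp_mul_mul_eq_zero_of_condExp_sq_ae_eq (hle k) (𝔽.le k) hH hHi
          (hφm k) hinc hHinc (hφ2 k) hw hincw
      · exact hM.integral_mul_increment_mul_mul_increment_eq_zero hkj hH'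
          ((hφm j).mono (hle j)) hHinc (hφ2 j)

end Orthogonality

theorem stmt_11_general {Ω : Type*} {mΩ : MeasurableSpace Ω} {P : Measure Ω} [IsProbabilityMeasure P]
    (N : ℕ) (𝔽 ℍ : Filtration ℕ mΩ) (hle : ∀ k, ℍ k ≤ 𝔽 k)
    (M : ℕ → Ω → ℝ) (hM : Martingale M 𝔽 P) (hM2 : ∀ k, MemLp (M k) 2 P)
    (ξ : Ω → ℝ)
    (Utilde : Ω → ℝ) (HF : ℕ → Ω → ℝ) (OtildeN : Ω → ℝ)
    (hUtmeas : StronglyMeasurable[𝔽 0] Utilde) (hUt2 : MemLp Utilde 2 P)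
    (hHFmeas : ∀ k, StronglyMeasurable[𝔽 k] (HF k))
    (hHF2 : ∀ k, MemLp (HF k) 2 P)
    (hHFM2 : ∀ k, MemLp (fun ω => HF k ω * (M (k + 1) ω - M k ω)) 2 P)
    (hOt2 : MemLp OtildeN 2 P)
    (hOtorth : ∀ (V₀ : Ω → ℝ) (φ : ℕ → Ω → ℝ), MemLp V₀ 2 P →
      StronglyMeasurable[𝔽 0] V₀ →
      (∀ k, StronglyMeasurable[𝔽 k] (φ k)) →
      (∀ k, MemLp (fun ω => φ k ω * (M (k + 1) ω - M k ω)) 2 P) →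
      ∫ ω, OtildeN ω * (V₀ ω + ∑ k ∈ Finset.range N, φ k ω * (M (k + 1) ω - M k ω)) ∂P = 0)
    (hdec : ξ =ᵐ[P] fun ω =>
      Utilde ω + (∑ k ∈ Finset.range N, HF k ω * (M (k + 1) ω - M k ω)) + OtildeN ω)
    (hw : ∀ k, ∃ w' : Ω → ℝ, StronglyMeasurable[ℍ k] w' ∧
      P[fun ω => (M (k + 1) ω - M k ω) ^ 2 | 𝔽 k] =ᵐ[P] w') :
    (∀ k, MemLp (fun ω => (P[HF k | ℍ k]) ω * (M (k + 1) ω - M k ω)) 2 P) ∧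
    (∀ (V₀ : Ω → ℝ) (φ : ℕ → Ω → ℝ), MemLp V₀ 2 P → StronglyMeasurable[ℍ 0] V₀ →
      (∀ k, StronglyMeasurable[ℍ k] (φ k)) →
      (∀ k, MemLp (fun ω => φ k ω * (M (k + 1) ω - M k ω)) 2 P) →
      ∫ ω, (ξ ω - (P[Utilde | ℍ 0]) ω
          - ∑ k ∈ Finset.range N, (P[HF k | ℍ k]) ω * (M (k + 1) ω - M k ω))
        * (V₀ ω + ∑ k ∈ Finset.range N, φ k ω * (M (k + 1) ω - M k ω)) ∂P = 0) := by
  have hinc2 : ∀ k, MemLp (fun ω => M (k + 1) ω - M k ω) 2 P :=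
    fun k => (hM2 (k + 1)).sub (hM2 k)
  have hHH : ∀ k, MemLp (fun ω => (P[HF k | ℍ k]) ω * (M (k + 1) ω - M k ω)) 2 P := fun k => by
    obtain ⟨w, hwm, hincw⟩ := hw k
    exact memLp_condExp_mul_of_condExp_sq_ae_eq (hle k) (𝔽.le k) (hHFmeas k) (hHF2 k) (hinc2 k)
      (hHFM2 k) hwm hincw
  have hU2 : MemLp (fun ω => Utilde ω - (P[Utilde|ℍ 0]) ω) 2 P :=
    hUt2.sub (hUt2.condExp one_le_two)
  have hZ2 : ∀ k, MemLp (fun ω => (HF k ω - (P[HF k|ℍ k]) ω) * (M (k + 1) ω - M k ω)) 2 P :=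
    fun k => ((hHFM2 k).sub (hHH k)).ae_eq (ae_of_all _ fun ω => by simp only [Pi.sub_apply]; ring)
  have hZ : ∀ k ∈ Finset.range N, OrthogonalToMartingaleTransforms ℍ M N P
      fun ω => (HF k ω - (P[HF k|ℍ k]) ω) * (M (k + 1) ω - M k ω) := fun k _ => by
    obtain ⟨w, hwm, hincw⟩ := hw k
    exact orthogonalToMartingaleTransforms_sub_condExp_mul_increment hle hM (hHFmeas k)
      ((hHF2 k).integrable one_le_two) (hinc2 k) (hZ2 k) hwm hincw
  have hres : (fun ω => Utilde ω - (P[Utilde|ℍ 0]) ω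
        + ∑ k ∈ Finset.range N, (HF k ω - (P[HF k|ℍ k]) ω) * (M (k + 1) ω - M k ω) + OtildeN ω)
      =ᵐ[P] fun ω => ξ ω - (P[Utilde | ℍ 0]) ω
        - ∑ k ∈ Finset.range N, (P[HF k | ℍ k]) ω * (M (k + 1) ω - M k ω) := by
    filter_upwards [hdec] with ω hω
    simp only [hω, sub_mul, Finset.sum_sub_distrib]
    ring
  refine ⟨hHH, OrthogonalToMartingaleTransforms.congr_ae hres ?_⟩
  refine .add (hU2.add (memLp_finsetSum _ fun k _ => hZ2 k)) hOt2 ?_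
    (OrthogonalToMartingaleTransforms.mono hle hOtorth)
  exact .add hU2 (memLp_finsetSum _ fun k _ => hZ2 k)
    (orthogonalToMartingaleTransforms_sub_condExp hle hM hUtmeas hUt2)
    (.finsetSum (fun k _ => hZ2 k) hZ)

/-- Discrete form of the paper's Proposition 4.1: if `ξ = Utilde + Σ H^F_k ΔM_k + Õ_N` is the
full-information Galtchouk–Kunita–Watanabe decomposition and the conditional variances
`w_k = E[(ΔM_k)²|𝔽 k]` are (a.e.) `ℍ k`-measurable, then with `U₀ = E[Utilde|ℍ 0]` and
`H^H_k = E[H^F_k|ℍ k]`, each `H^H_k ΔM_k` is square-integrable and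
`ξ − U₀ − Σ H^H_k ΔM_k` is orthogonal in `L²` to every element of `L^H`. -/
theorem stmt_11 {Ω : Type*} {mΩ : MeasurableSpace Ω} {P : Measure Ω} [IsProbabilityMeasure P]
    (N : ℕ) (𝔽 ℍ : Filtration ℕ mΩ) (hle : ∀ k, ℍ k ≤ 𝔽 k)
    (M : ℕ → Ω → ℝ) (hM : Martingale M 𝔽 P) (hM2 : ∀ k, MemLp (M k) 2 P)
    (ξ : Ω → ℝ) (hξ : MemLp ξ 2 P)
    (Utilde : Ω → ℝ) (HF : ℕ → Ω → ℝ) (OtildeN : Ω → ℝ)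
    (hUtmeas : StronglyMeasurable[𝔽 0] Utilde) (hUt2 : MemLp Utilde 2 P)
    (hHFmeas : ∀ k, StronglyMeasurable[𝔽 k] (HF k))
    (hHF2 : ∀ k, MemLp (HF k) 2 P)
    (hHFM2 : ∀ k, MemLp (fun ω => HF k ω * (M (k + 1) ω - M k ω)) 2 P)
    (hOt2 : MemLp OtildeN 2 P)
    (hOtorth : ∀ (V₀ : Ω → ℝ) (φ : ℕ → Ω → ℝ), MemLp V₀ 2 P →
      StronglyMeasurable[𝔽 0] V₀ →
      (∀ k, StronglyMeasurable[𝔽 k] (φ k)) →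
      (∀ k, MemLp (fun ω => φ k ω * (M (k + 1) ω - M k ω)) 2 P) →
      ∫ ω, OtildeN ω * (V₀ ω + ∑ k ∈ Finset.range N, φ k ω * (M (k + 1) ω - M k ω)) ∂P = 0)
    (hdec : ξ =ᵐ[P] fun ω =>
      Utilde ω + (∑ k ∈ Finset.range N, HF k ω * (M (k + 1) ω - M k ω)) + OtildeN ω)
    (hw : ∀ k, ∃ w' : Ω → ℝ, StronglyMeasurable[ℍ k] w' ∧
      P[fun ω => (M (k + 1) ω - M k ω) ^ 2 | 𝔽 k] =ᵐ[P] w') :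
    (∀ k, MemLp (fun ω => (P[HF k | ℍ k]) ω * (M (k + 1) ω - M k ω)) 2 P) ∧
    (∀ (V₀ : Ω → ℝ) (φ : ℕ → Ω → ℝ), MemLp V₀ 2 P → StronglyMeasurable[ℍ 0] V₀ →
      (∀ k, StronglyMeasurable[ℍ k] (φ k)) →
      (∀ k, MemLp (fun ω => φ k ω * (M (k + 1) ω - M k ω)) 2 P) →
      ∫ ω, (ξ ω - (P[Utilde | ℍ 0]) ω
          - ∑ k ∈ Finset.range N, (P[HF k | ℍ k]) ω * (M (k + 1) ω - M k ω))
        * (V₀ ω + ∑ k ∈ Finset.range N, φ k ω * (M (k + 1) ω - M k ω)) ∂P = 0) :=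
  stmt_11_general N 𝔽 ℍ hle M hM hM2 ξ Utilde HF OtildeN hUtmeas hUt2 hHFmeas hHF2 hHFM2 hOt2
    hOtorth hdec hw
end

section
/- Let ξ be a square-integrable random variable and suppose ξ = U_0 + Σ_{k=0}^{N−1} H^H_k·ΔM_k + O_N P-a.s., where U_0 is square-integrable H_0-measurable, H^H is an admissible ℍ-predictable process, O_N is square-integrable, and E[O_N · Σ_{k=0}^{N−1} φ_k·ΔM_k] = 0 for every admissible ℍ-predictable process φ. Then for every admissible ℍ-predictable process θ and every n ≤ N, E[(ξ − E[ξ|F_n] − Σ_{k=n}^{N−1} θ_k·ΔM_k)² | H_n] ≥ E[(ξ − E[ξ|F_n] − Σ_{k=n}^{N−1} H^H_k·ΔM_k)² | H_n] P-almost surely. -/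
/-!
The hedging error of the `H^H`-strategy, `R = ξ - E[ξ|F_n] - Σ_{k ≥ n} H^H_k ΔM_k`, splits a.s.
as `G + O_N` with `G` an `F_n`-measurable square-integrable variable. The variable `G` is
orthogonal to every martingale transform started at time `n`, and `O_N` is orthogonal to every
admissible `ℍ`-predictable transform. Localizing by `ℍ_n`-indicators, which keep holdings
`ℍ`-predictable from time `n` on, gives `E[R S | H_n] = 0` for `S = Σ_{k ≥ n} (H^H_k - θ_k) ΔM_k`.
The remaining cost of `θ` is `R + S`, so its conditional second moment is
`E[R² | H_n] + E[S² | H_n] ≥ E[R² | H_n]`.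
-/

open MeasureTheory Finset

section

variable {Ω : Type*} {mΩ : MeasurableSpace Ω} {P : Measure Ω}

lemma condExp_ae_eq_zero_of_forall_setIntegral_eq_zero {m : MeasurableSpace Ω} (hm : m ≤ mΩ)
    [SigmaFinite (P.trim hm)] {f : Ω → ℝ} (hf : Integrable f P)
    (h : ∀ s, MeasurableSet[m] s → ∫ ω in s, f ω ∂P = 0) : P[f | m] =ᵐ[P] 0 :=
  (ae_eq_condExp_of_forall_setIntegral_eq hm hf (fun _ _ _ => integrableOn_zero)
    (fun s hs _ => by simp [h s hs]) stronglyMeasurable_zero.aestronglyMeasurable).symm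

lemma condExp_sq_le_condExp_sq_add {m : MeasurableSpace Ω} {X Y : Ω → ℝ} (hX : MemLp X 2 P)
    (hY : MemLp Y 2 P) (hXY : P[fun ω => X ω * Y ω | m] =ᵐ[P] 0) :
    P[fun ω => X ω ^ 2 | m] ≤ᵐ[P] P[fun ω => (X ω + Y ω) ^ 2 | m] := by
  have hXY_int : Integrable ((2 : ℝ) • fun ω => X ω * Y ω) P := (hX.integrable_mul hY).smul 2
  have hexpand : (fun ω => (X ω + Y ω) ^ 2)
      = (fun ω => X ω ^ 2) + (((2 : ℝ) • fun ω => X ω * Y ω) + fun ω => Y ω ^ 2) := by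
    funext ω; simp only [Pi.add_apply, Pi.smul_apply, smul_eq_mul]; ring
  filter_upwards [hexpand ▸ condExp_add hX.integrable_sq (hXY_int.add hY.integrable_sq) m,
    condExp_add hXY_int hY.integrable_sq m, condExp_smul (m := m) (2 : ℝ) (fun ω => X ω * Y ω),
    hXY, condExp_nonneg (m := m) (Filter.Eventually.of_forall fun ω => sq_nonneg (Y ω))]
    with ω hsq hsum hsmul hcross hnonneg
  simp only [Pi.add_apply, Pi.smul_apply, smul_eq_mul, Pi.zero_apply]
    at hsq hsum hsmul hcross hnonneg
  rw [hsq, hsum, hsmul, hcross]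
  linarith

lemma memLp_sub_condExp_sub_sum {m : MeasurableSpace Ω} {ξ : Ω → ℝ} (hξ : MemLp ξ 2 P)
    {f : ℕ → Ω → ℝ} (hf : ∀ k, MemLp (f k) 2 P) (s : Finset ℕ) :
    MemLp (fun ω => ξ ω - P[ξ | m] ω - ∑ k ∈ s, f k ω) 2 P :=
  (hξ.sub (hξ.condExp one_le_two)).sub (memLp_finsetSum s fun k _ => hf k)

lemma MeasureTheory.Martingale.integral_mul_sub_eq_zero {ι : Type*} [Preorder ι] [IsFiniteMeasure P]
    {𝔽 : Filtration ι mΩ} {M : ι → Ω → ℝ} (hM : Martingale M 𝔽 P) {i j : ι} (hij : i ≤ j)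
    {Z : Ω → ℝ} (hZ : StronglyMeasurable[𝔽 i] Z)
    (hint : Integrable (fun ω => Z ω * (M j ω - M i ω)) P) :
    ∫ ω, Z ω * (M j ω - M i ω) ∂P = 0 := by
  have hincr : P[M j - M i | 𝔽 i] =ᵐ[P] 0 := by
    filter_upwards [condExp_sub (hM.integrable j) (hM.integrable i) (𝔽 i),
      hM.condExp_ae_eq hij] with ω hsub hj
    rw [hsub, Pi.sub_apply, hj,
      condExp_of_stronglyMeasurable (𝔽.le i) (hM.stronglyAdapted i) (hM.integrable i)]
    simp
  calc ∫ ω, Z ω * (M j ω - M i ω) ∂P = ∫ ω, P[Z * (M j - M i) | 𝔽 i] ω ∂P :=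
        (integral_condExp (𝔽.le i)).symm
    _ = ∫ ω, (Z * P[M j - M i | 𝔽 i]) ω ∂P := integral_congr_ae
        (condExp_mul_of_stronglyMeasurable_left hZ hint ((hM.integrable j).sub (hM.integrable i)))
    _ = 0 := by
        rw [integral_congr_ae (g := 0) (hincr.mono fun ω hω => by simp [hω])]
        simp

lemma MeasureTheory.Martingale.integral_mul_sum_Ico_eq_zero [IsFiniteMeasure P]
    {𝔽 : Filtration ℕ mΩ} {M : ℕ → Ω → ℝ} (hM : Martingale M 𝔽 P) {n N : ℕ} {G : Ω → ℝ}
    (hG : StronglyMeasurable[𝔽 n] G) (hG2 : MemLp G 2 P) {ψ : ℕ → Ω → ℝ}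
    (hψ : ∀ k, n ≤ k → StronglyMeasurable[𝔽 k] (ψ k))
    (hψ2 : ∀ k, n ≤ k → MemLp (fun ω => ψ k ω * (M (k + 1) ω - M k ω)) 2 P) :
    ∫ ω, G ω * ∑ k ∈ Ico n N, ψ k ω * (M (k + 1) ω - M k ω) ∂P = 0 := by
  have hint : ∀ k ∈ Ico n N,
      Integrable (fun ω => G ω * ψ k ω * (M (k + 1) ω - M k ω)) P := fun k hk =>
    (hG2.integrable_mul (hψ2 k (mem_Ico.1 hk).1)).congr
      (Filter.Eventually.of_forall fun ω => by simp [mul_assoc])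
  simp_rw [mul_sum, ← mul_assoc]
  rw [integral_finsetSum _ hint]
  refine sum_eq_zero fun k hk => hM.integral_mul_sub_eq_zero k.le_succ ?_ (hint k hk)
  exact (hG.mono (𝔽.mono (mem_Ico.1 hk).1)).mul (hψ k (mem_Ico.1 hk).1)

lemma integral_mul_sum_Ico_eq_zero_of_orthogonal {ℍ : Filtration ℕ mΩ} {M : ℕ → Ω → ℝ}
    {O : Ω → ℝ} {N : ℕ}
    (horth : ∀ φ : ℕ → Ω → ℝ, (∀ k, StronglyMeasurable[ℍ k] (φ k)) →
      (∀ k, MemLp (fun ω => φ k ω * (M (k + 1) ω - M k ω)) 2 P) →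
      ∫ ω, O ω * ∑ k ∈ range N, φ k ω * (M (k + 1) ω - M k ω) ∂P = 0)
    (n : ℕ) {ψ : ℕ → Ω → ℝ} (hψ : ∀ k, n ≤ k → StronglyMeasurable[ℍ k] (ψ k))
    (hψ2 : ∀ k, n ≤ k → MemLp (fun ω => ψ k ω * (M (k + 1) ω - M k ω)) 2 P) :
    ∫ ω, O ω * ∑ k ∈ Ico n N, ψ k ω * (M (k + 1) ω - M k ω) ∂P = 0 := by
  have key := horth (fun k => if n ≤ k then ψ k else 0)
    (fun k => by split_ifs with h; exacts [hψ k h, stronglyMeasurable_const])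
    (fun k => by split_ifs with h; exacts [hψ2 k h, by simp])
  have hsum : ∀ ω, ∑ k ∈ range N, (if n ≤ k then ψ k else 0) ω * (M (k + 1) ω - M k ω)
      = ∑ k ∈ Ico n N, ψ k ω * (M (k + 1) ω - M k ω) := fun ω => by
    have hIco : Ico n N = (range N).filter (n ≤ ·) := by
      ext k; simp only [mem_Ico, mem_filter, mem_range]; omega
    rw [hIco, sum_filter]
    exact sum_congr rfl fun k _ => by split_ifs <;> simp
  simpa only [hsum] using key

lemma condExp_mul_sum_Ico_eq_zero [IsFiniteMeasure P] {ℍ : Filtration ℕ mΩ} {M : ℕ → Ω → ℝ}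
    {X : Ω → ℝ} {n N : ℕ} (hX2 : MemLp X 2 P)
    (hX : ∀ ψ : ℕ → Ω → ℝ, (∀ k, n ≤ k → StronglyMeasurable[ℍ k] (ψ k)) →
      (∀ k, n ≤ k → MemLp (fun ω => ψ k ω * (M (k + 1) ω - M k ω)) 2 P) →
      ∫ ω, X ω * ∑ k ∈ Ico n N, ψ k ω * (M (k + 1) ω - M k ω) ∂P = 0)
    {ψ : ℕ → Ω → ℝ} (hψ : ∀ k, n ≤ k → StronglyMeasurable[ℍ k] (ψ k))
    (hψ2 : ∀ k, n ≤ k → MemLp (fun ω => ψ k ω * (M (k + 1) ω - M k ω)) 2 P) :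
    P[fun ω => X ω * ∑ k ∈ Ico n N, ψ k ω * (M (k + 1) ω - M k ω) | ℍ n] =ᵐ[P] 0 := by
  have hS2 := memLp_finsetSum (Ico n N) fun k hk => hψ2 k (mem_Ico.1 hk).1
  refine condExp_ae_eq_zero_of_forall_setIntegral_eq_zero (ℍ.le n) (hX2.integrable_mul hS2)
    fun s hs => ?_
  have hlocal := hX (fun k => s.indicator (ψ k))
    (fun k hk => (hψ k hk).indicator (ℍ.mono hk s hs))
    (fun k hk => by
      convert (hψ2 k hk).indicator (ℍ.le n s hs) using 1
      funext ω
      exact (Set.indicator_mul_left s (ψ k) fun ω => M (k + 1) ω - M k ω).symm)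
  rw [← integral_indicator (ℍ.le n s hs)]
  refine (integral_congr_ae (Filter.Eventually.of_forall fun ω => ?_)).trans hlocal
  by_cases hω : ω ∈ s <;> simp [hω]

lemma stronglyMeasurable_sum_range_mul_sub {𝔽 : Filtration ℕ mΩ} {M φ : ℕ → Ω → ℝ}
    (hM : StronglyAdapted 𝔽 M) (hφ : ∀ k, StronglyMeasurable[𝔽 k] (φ k)) (n : ℕ) :
    StronglyMeasurable[𝔽 n] fun ω => ∑ k ∈ range n, φ k ω * (M (k + 1) ω - M k ω) := by
  refine Finset.stronglyMeasurable_fun_sum _ fun k hk => ?_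
  have hkn : k < n := mem_range.1 hk
  exact ((hφ k).mono (𝔽.mono hkn.le)).mul
    (((hM (k + 1)).mono (𝔽.mono hkn)).sub ((hM k).mono (𝔽.mono hkn.le)))

lemma integral_remainder_mul_sum_Ico_eq_zero [IsFiniteMeasure P] {N n : ℕ} (hn : n ≤ N)
    {𝔽 ℍ : Filtration ℕ mΩ} (hle : ∀ k, ℍ k ≤ 𝔽 k) {M : ℕ → Ω → ℝ} (hM : Martingale M 𝔽 P)
    {ξ U₀ ON : Ω → ℝ} {HH : ℕ → Ω → ℝ} (hξ : MemLp ξ 2 P)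
    (hU₀ : StronglyMeasurable[ℍ 0] U₀) (hHH : ∀ k, StronglyMeasurable[ℍ k] (HH k))
    (hHHM2 : ∀ k, MemLp (fun ω => HH k ω * (M (k + 1) ω - M k ω)) 2 P) (hON2 : MemLp ON 2 P)
    (horth : ∀ φ : ℕ → Ω → ℝ, (∀ k, StronglyMeasurable[ℍ k] (φ k)) →
      (∀ k, MemLp (fun ω => φ k ω * (M (k + 1) ω - M k ω)) 2 P) →
      ∫ ω, ON ω * ∑ k ∈ range N, φ k ω * (M (k + 1) ω - M k ω) ∂P = 0)
    (hdec : ξ =ᵐ[P] fun ω =>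
      U₀ ω + (∑ k ∈ range N, HH k ω * (M (k + 1) ω - M k ω)) + ON ω)
    {ψ : ℕ → Ω → ℝ} (hψ : ∀ k, n ≤ k → StronglyMeasurable[ℍ k] (ψ k))
    (hψ2 : ∀ k, n ≤ k → MemLp (fun ω => ψ k ω * (M (k + 1) ω - M k ω)) 2 P) :
    ∫ ω, (ξ ω - P[ξ | 𝔽 n] ω - ∑ k ∈ Ico n N, HH k ω * (M (k + 1) ω - M k ω)) *
      ∑ k ∈ Ico n N, ψ k ω * (M (k + 1) ω - M k ω) ∂P = 0 := by
  set G : Ω → ℝ := fun ω =>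
    U₀ ω + ∑ k ∈ range n, HH k ω * (M (k + 1) ω - M k ω) - P[ξ | 𝔽 n] ω
  have hsplit : (fun ω => ξ ω - P[ξ | 𝔽 n] ω - ∑ k ∈ Ico n N, HH k ω * (M (k + 1) ω - M k ω))
      =ᵐ[P] fun ω => G ω + ON ω := by
    filter_upwards [hdec] with ω hω
    rw [hω, ← sum_range_add_sum_Ico _ hn]
    ring
  have hG : StronglyMeasurable[𝔽 n] G :=
    ((hU₀.mono ((hle 0).trans (𝔽.mono n.zero_le))).add
      (stronglyMeasurable_sum_range_mul_sub hM.stronglyAdapted (fun k => (hHH k).mono (hle k))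
        n)).sub stronglyMeasurable_condExp
  have hR2 := memLp_sub_condExp_sub_sum (m := 𝔽 n) hξ hHHM2 (Ico n N)
  have hG2 : MemLp G 2 P := (hR2.sub hON2).ae_eq (hsplit.mono fun ω hω => by simp [hω])
  have hS2 := memLp_finsetSum (Ico n N) fun k hk => hψ2 k (mem_Ico.1 hk).1
  calc _ = ∫ ω, G ω * ∑ k ∈ Ico n N, ψ k ω * (M (k + 1) ω - M k ω)
        + ON ω * ∑ k ∈ Ico n N, ψ k ω * (M (k + 1) ω - M k ω) ∂P :=
        integral_congr_ae (hsplit.mono fun ω hω => by simp only [hω]; ring)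
    _ = _ := integral_add (hG2.integrable_mul hS2) (hON2.integrable_mul hS2)
    _ = 0 := by
      rw [hM.integral_mul_sum_Ico_eq_zero hG hG2 (fun k hk => (hψ k hk).mono (hle k)) hψ2,
        integral_mul_sum_Ico_eq_zero_of_orthogonal horth n hψ hψ2, add_zero]

end

theorem stmt_15_general {Ω : Type*} {mΩ : MeasurableSpace Ω} {P : Measure Ω} [IsProbabilityMeasure P]
    (N : ℕ) (𝔽 ℍ : Filtration ℕ mΩ) (hle : ∀ k, ℍ k ≤ 𝔽 k)
    (M : ℕ → Ω → ℝ) (hM : Martingale M 𝔽 P)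
    (ξ : Ω → ℝ) (hξ : MemLp ξ 2 P)
    (U₀ : Ω → ℝ) (HH : ℕ → Ω → ℝ) (ON : Ω → ℝ)
    (hU₀meas : StronglyMeasurable[ℍ 0] U₀)
    (hHHmeas : ∀ k, StronglyMeasurable[ℍ k] (HH k))
    (hHHM2 : ∀ k, MemLp (fun ω => HH k ω * (M (k + 1) ω - M k ω)) 2 P)
    (hON2 : MemLp ON 2 P)
    (horth : ∀ φ : ℕ → Ω → ℝ, (∀ k, StronglyMeasurable[ℍ k] (φ k)) →
      (∀ k, MemLp (fun ω => φ k ω * (M (k + 1) ω - M k ω)) 2 P) →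
      ∫ ω, ON ω * ∑ k ∈ Finset.range N, φ k ω * (M (k + 1) ω - M k ω) ∂P = 0)
    (hdec : ξ =ᵐ[P] fun ω =>
      U₀ ω + (∑ k ∈ Finset.range N, HH k ω * (M (k + 1) ω - M k ω)) + ON ω) :
    ∀ θ : ℕ → Ω → ℝ, (∀ k, StronglyMeasurable[ℍ k] (θ k)) →
      (∀ k, MemLp (fun ω => θ k ω * (M (k + 1) ω - M k ω)) 2 P) →
      ∀ n ≤ N,
        P[fun ω => (ξ ω - (P[ξ | 𝔽 n]) ω
            - ∑ k ∈ Finset.Ico n N, HH k ω * (M (k + 1) ω - M k ω)) ^ 2 | ℍ n]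
          ≤ᵐ[P]
        P[fun ω => (ξ ω - (P[ξ | 𝔽 n]) ω
            - ∑ k ∈ Finset.Ico n N, θ k ω * (M (k + 1) ω - M k ω)) ^ 2 | ℍ n] := by
  intro θ hθ hθ2 n hn
  have hψ2 : ∀ k, MemLp (fun ω => (HH k ω - θ k ω) * (M (k + 1) ω - M k ω)) 2 P := fun k =>
    ((hHHM2 k).sub (hθ2 k)).ae_eq (ae_of_all _ fun ω => by simp only [Pi.sub_apply]; ring)
  have hR2 := memLp_sub_condExp_sub_sum (m := 𝔽 n) hξ hHHM2 (Ico n N)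
  have hcost : ∀ ω, ξ ω - P[ξ | 𝔽 n] ω - ∑ k ∈ Finset.Ico n N, θ k ω * (M (k + 1) ω - M k ω)
      = (ξ ω - P[ξ | 𝔽 n] ω - ∑ k ∈ Finset.Ico n N, HH k ω * (M (k + 1) ω - M k ω))
        + ∑ k ∈ Finset.Ico n N, (HH k ω - θ k ω) * (M (k + 1) ω - M k ω) := fun ω => by
    simp only [sub_mul, sum_sub_distrib]
    ring
  simp only [hcost]
  exact condExp_sq_le_condExp_sq_add hR2 (memLp_finsetSum _ fun k _ => hψ2 k)
    (condExp_mul_sum_Ico_eq_zero (ψ := fun k ω => HH k ω - θ k ω) hR2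
      (fun _ hψ hψ2 => integral_remainder_mul_sum_Ico_eq_zero hn hle hM hξ hU₀meas hHHmeas hHHM2
        hON2 horth hdec hψ hψ2)
      (fun k _ => (hHHmeas k).sub (hθ k)) fun k _ => hψ2 k)

/-- Discrete form of the paper's Theorem 5.6: if `ξ = U₀ + Σ H^H_k ΔM_k + O_N` a.s. is the
partial-information GKW decomposition, then the strategy with risky holdings `H^H`
minimizes the `ℍ`-risk: for every admissible `ℍ`-predictable `θ` and `n ≤ N`,
`E[(ξ − E[ξ|𝔽 n] − Σ_{k=n}^{N−1} H^H_k ΔM_k)² | ℍ n]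
  ≤ E[(ξ − E[ξ|𝔽 n] − Σ_{k=n}^{N−1} θ_k ΔM_k)² | ℍ n]` a.s. -/
theorem stmt_15 {Ω : Type*} {mΩ : MeasurableSpace Ω} {P : Measure Ω} [IsProbabilityMeasure P]
    (N : ℕ) (𝔽 ℍ : Filtration ℕ mΩ) (hle : ∀ k, ℍ k ≤ 𝔽 k)
    (M : ℕ → Ω → ℝ) (hM : Martingale M 𝔽 P) (hM2 : ∀ k, MemLp (M k) 2 P)
    (ξ : Ω → ℝ) (hξ : MemLp ξ 2 P)
    (U₀ : Ω → ℝ) (HH : ℕ → Ω → ℝ) (ON : Ω → ℝ)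
    (hU₀meas : StronglyMeasurable[ℍ 0] U₀) (hU₀2 : MemLp U₀ 2 P)
    (hHHmeas : ∀ k, StronglyMeasurable[ℍ k] (HH k))
    (hHHM2 : ∀ k, MemLp (fun ω => HH k ω * (M (k + 1) ω - M k ω)) 2 P)
    (hON2 : MemLp ON 2 P)
    (horth : ∀ φ : ℕ → Ω → ℝ, (∀ k, StronglyMeasurable[ℍ k] (φ k)) →
      (∀ k, MemLp (fun ω => φ k ω * (M (k + 1) ω - M k ω)) 2 P) →
      ∫ ω, ON ω * ∑ k ∈ Finset.range N, φ k ω * (M (k + 1) ω - M k ω) ∂P = 0)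
    (hdec : ξ =ᵐ[P] fun ω =>
      U₀ ω + (∑ k ∈ Finset.range N, HH k ω * (M (k + 1) ω - M k ω)) + ON ω) :
    ∀ θ : ℕ → Ω → ℝ, (∀ k, StronglyMeasurable[ℍ k] (θ k)) →
      (∀ k, MemLp (fun ω => θ k ω * (M (k + 1) ω - M k ω)) 2 P) →
      ∀ n ≤ N,
        P[fun ω => (ξ ω - (P[ξ | 𝔽 n]) ω
            - ∑ k ∈ Finset.Ico n N, HH k ω * (M (k + 1) ω - M k ω)) ^ 2 | ℍ n]
          ≤ᵐ[P]
        P[fun ω => (ξ ω - (P[ξ | 𝔽 n]) ω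
            - ∑ k ∈ Finset.Ico n N, θ k ω * (M (k + 1) ω - M k ω)) ^ 2 | ℍ n] :=
  stmt_15_general N 𝔽 ℍ hle M hM ξ hξ U₀ HH ON hU₀meas hHHmeas hHHM2 hON2 horth hdec
end
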